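/- Order of the rate-one ZRP Poincaré constant: for any n×n doubly stochastic matrix P with the mean-field bound λ(ZRP(K_n,1,m)) ≥ c(1+m/n)^{−2} (c universal) available as a hypothesis, one has c λ(P)(1+m/n)^{−2} ≤ λ(ZRP(P,1,m)) ≤ λ(P) n(n+1)/((n+m)(n+m−1)), so λ(ZRP(P,1,m)) ≍ λ(P)(1+m/n)^{−2} up to universal constants. -/
import Mathlib


open Finset

variable (V : Type*) [Fintype V] [DecidableEq V]

/-- Product-form (unnormalized) stationary weight of a configuration. -/
noncomputable def weight (π : V → ℝ) (r : V → ℕ → ℝ) (η : V → ℕ) : ℝ :=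
  ∏ x, ∏ k ∈ Finset.Icc 1 (η x), π x / r x k

/-- Add one particle at site `x` : the configuration `η + δ_x`. -/
def addOne (η : V → ℕ) (x : V) : V → ℕ := Function.update η x (η x + 1)

/-- Move a particle from `x` to `y`: the configuration `η + δ_y - δ_x`. -/
def move (η : V → ℕ) (x y : V) : V → ℕ :=
  addOne V (Function.update η x (η x - 1)) y

/-- The set of configurations of `m` particles on `V`. -/
def configs (m : ℕ) : Finset (V → ℕ) :=
  (Fintype.piFinset fun _ : V => Finset.range (m + 1)).filter fun η => ∑ x, η x = m

/-- Single-particle Dirichlet form `⟨φ, (I - P) ψ⟩_π`. -/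
noncomputable def EP (π : V → ℝ) (P : V → V → ℝ) (φ ψ : V → ℝ) : ℝ :=
  ∑ x, ∑ y, π x * P x y * (φ x * (ψ x - ψ y))

/-- Zero-range Dirichlet form with jump matrix `P`, rates `r` and measure `μ`
on configurations with `m` particles. -/
noncomputable def EZRP (P : V → V → ℝ) (r : V → ℕ → ℝ) (μ : (V → ℕ) → ℝ) (m : ℕ)
    (f g : (V → ℕ) → ℝ) : ℝ :=
  ∑ η ∈ configs V m, ∑ x, ∑ y,
    μ η * r x (η x) * P x y * (f η * (g η - g (move V η x y)))

/-- Mean of an observable on `m`-particle configurations under `μ`. -/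
noncomputable def meanOn (m : ℕ) (μ : (V → ℕ) → ℝ) (f : (V → ℕ) → ℝ) : ℝ :=
  ∑ η ∈ configs V m, μ η * f η

/-- Variance of an observable on `m`-particle configurations under `μ`. -/
noncomputable def varOn (m : ℕ) (μ : (V → ℕ) → ℝ) (f : (V → ℕ) → ℝ) : ℝ :=
  meanOn V m μ (fun η => (f η) ^ 2) - (meanOn V m μ f) ^ 2

/-- Variance of `φ : V → ℝ` under the probability vector `π`. -/
noncomputable def varPi (π : V → ℝ) (φ : V → ℝ) : ℝ :=
  ∑ x, π x * (φ x) ^ 2 - (∑ x, π x * φ x) ^ 2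

section Aux
variable {V}

lemma mem_configs_iff {m : ℕ} {η : V → ℕ} : η ∈ configs V m ↔ ∑ x, η x = m := by
  constructor
  · intro h; exact (Finset.mem_filter.mp h).2
  · intro h
    refine Finset.mem_filter.mpr ⟨?_, h⟩
    rw [Fintype.mem_piFinset]
    intro x
    rw [Finset.mem_range, Nat.lt_succ_iff, ← h]
    exact Finset.single_le_sum (fun i _ => Nat.zero_le _) (Finset.mem_univ x)

lemma sum_addOne (ξ : V → ℕ) (x : V) : ∑ z, addOne V ξ x z = (∑ z, ξ z) + 1 := by
  unfold addOne
  rw [Finset.sum_update_of_mem (Finset.mem_univ x)]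
  rw [← Finset.sum_erase_add _ _ (Finset.mem_univ x), Finset.erase_eq]
  ring

def subOne (η : V → ℕ) (x : V) : V → ℕ := Function.update η x (η x - 1)

lemma addOne_subOne {η : V → ℕ} {x : V} (h : η x ≠ 0) : addOne V (subOne η x) x = η := by
  unfold addOne subOne
  rw [Function.update_idem, Function.update_self]
  rw [Nat.sub_add_cancel (Nat.one_le_iff_ne_zero.mpr h)]
  exact Function.update_eq_self x η

lemma subOne_addOne (ξ : V → ℕ) (x : V) : subOne (addOne V ξ x) x = ξ := by
  unfold addOne subOne
  rw [Function.update_idem, Function.update_self, Nat.add_sub_cancel]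
  exact Function.update_eq_self x ξ

lemma addOne_apply_self (ξ : V → ℕ) (x : V) : addOne V ξ x x = ξ x + 1 :=
  Function.update_self x _ ξ

lemma sum_subOne {η : V → ℕ} {x : V} (h : η x ≠ 0) : ∑ z, subOne η x z = (∑ z, η z) - 1 := by
  have := sum_addOne (subOne η x) x
  rw [addOne_subOne h] at this
  omega

set_option linter.unusedSectionVars false

/-- Key reindexing: summing a function vanishing on `η x = 0` over `m+1`-particle
configurations equals summing over `m`-particle configurations after adding a particle at x. -/
lemma sum_shift {M : Type*} [AddCommMonoid M] (m : ℕ) (x : V) (F : (V → ℕ) → M) :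
    ∑ η ∈ configs V (m+1), (if η x = 0 then 0 else F η)
      = ∑ ξ ∈ configs V m, F (addOne V ξ x) := by
  have hpt : ∀ η, (if η x = 0 then (0:M) else F η) = if η x ≠ 0 then F η else 0 := by
    intro η; by_cases h : η x = 0 <;> simp [h]
  rw [Finset.sum_congr rfl (fun η _ => hpt η), ← Finset.sum_filter]
  refine Finset.sum_nbij' (fun η => subOne η x) (fun ξ => addOne V ξ x) ?_ ?_ ?_ ?_ ?_
  · intro η hη
    obtain ⟨hη, hx⟩ := Finset.mem_filter.mp hη
    rw [mem_configs_iff] at hη ⊢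
    rw [sum_subOne hx, hη]
    omega
  · intro ξ hξ
    rw [mem_configs_iff] at hξ
    refine Finset.mem_filter.mpr ⟨mem_configs_iff.mpr ?_, ?_⟩
    · rw [sum_addOne, hξ]
    · show addOne V ξ x x ≠ 0
      rw [addOne_apply_self]; omega
  · intro η hη
    exact addOne_subOne (Finset.mem_filter.mp hη).2
  · intro ξ _
    exact subOne_addOne ξ x
  · intro η hη
    rw [addOne_subOne (Finset.mem_filter.mp hη).2]

section Moments
variable (V)

noncomputable def NC (m : ℕ) : ℝ := ((configs V m).card : ℝ)
noncomputable def SS (m : ℕ) (x : V) : ℝ := ∑ η ∈ configs V m, (η x : ℝ)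
noncomputable def TT (m : ℕ) (x y : V) : ℝ := ∑ η ∈ configs V m, (η x : ℝ) * (η y : ℝ)

variable {V}

lemma configs_zero_apply {η : V → ℕ} (h : η ∈ configs V 0) (x : V) : η x = 0 := by
  have := mem_configs_iff.mp h
  have hx : η x ≤ ∑ z, η z := Finset.single_le_sum (fun i _ => Nat.zero_le _) (Finset.mem_univ x)
  omega

lemma SS_zero (x : V) : SS V 0 x = 0 := by
  unfold SS
  refine Finset.sum_eq_zero fun η hη => by rw [configs_zero_apply hη]; norm_num

lemma TT_zero (x y : V) : TT V 0 x y = 0 := by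
  unfold TT
  refine Finset.sum_eq_zero fun η hη => by rw [configs_zero_apply hη]; norm_num

lemma SS_succ (m : ℕ) (x : V) : SS V (m+1) x = SS V m x + NC V m := by
  unfold SS
  have h1 : ∀ η : V → ℕ, ((η x : ℝ)) = if η x = 0 then 0 else (η x : ℝ) := by
    intro η; by_cases h : η x = 0 <;> simp [h]
  rw [Finset.sum_congr rfl fun η _ => h1 η, sum_shift]
  have h2 : ∀ ξ : V → ℕ, ((addOne V ξ x x : ℕ) : ℝ) = (ξ x : ℝ) + 1 := by
    intro ξ; rw [addOne_apply_self]; push_cast; ring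
  rw [Finset.sum_congr rfl fun ξ _ => h2 ξ, Finset.sum_add_distrib]
  simp [NC, SS]

lemma TT_succ_diag (m : ℕ) (x : V) :
    TT V (m+1) x x = TT V m x x + 2 * SS V m x + NC V m := by
  unfold TT
  have h1 : ∀ η : V → ℕ, (η x : ℝ) * (η x : ℝ) = if η x = 0 then 0 else (η x : ℝ) * (η x : ℝ) := by
    intro η; by_cases h : η x = 0 <;> simp [h]
  rw [Finset.sum_congr rfl fun η _ => h1 η, sum_shift]
  have h2 : ∀ ξ : V → ℕ, ((addOne V ξ x x : ℕ) : ℝ) * ((addOne V ξ x x : ℕ) : ℝ)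
      = (ξ x : ℝ) * (ξ x : ℝ) + 2 * (ξ x : ℝ) + 1 := by
    intro ξ; rw [addOne_apply_self]; push_cast; ring
  rw [Finset.sum_congr rfl fun ξ _ => h2 ξ]
  rw [Finset.sum_add_distrib, Finset.sum_add_distrib, ← Finset.mul_sum]
  simp [NC, SS, TT]

lemma TT_succ_off (m : ℕ) {x y : V} (hxy : x ≠ y) :
    TT V (m+1) x y = TT V m x y + SS V m y := by
  unfold TT
  have h1 : ∀ η : V → ℕ, (η x : ℝ) * (η y : ℝ)
      = if η x = 0 then 0 else (η x : ℝ) * (η y : ℝ) := by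
    intro η; by_cases h : η x = 0 <;> simp [h]
  rw [Finset.sum_congr rfl fun η _ => h1 η, sum_shift]
  have h2 : ∀ ξ : V → ℕ, ((addOne V ξ x x : ℕ) : ℝ) * ((addOne V ξ x y : ℕ) : ℝ)
      = (ξ x : ℝ) * (ξ y : ℝ) + (ξ y : ℝ) := by
    intro ξ
    rw [addOne_apply_self]
    have : addOne V ξ x y = ξ y := Function.update_of_ne (Ne.symm hxy) _ ξ
    rw [this]; push_cast; ring
  rw [Finset.sum_congr rfl fun ξ _ => h2 ξ, Finset.sum_add_distrib]
  simp [SS, TT]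

lemma sum_SS (m : ℕ) : ∑ x, SS V m x = m * NC V m := by
  unfold SS
  rw [Finset.sum_comm]
  have : ∀ η ∈ configs V m, ∑ x, (η x : ℝ) = (m : ℝ) := by
    intro η hη
    rw [← Nat.cast_sum, mem_configs_iff.mp hη]
  rw [Finset.sum_congr rfl this, Finset.sum_const, NC, nsmul_eq_mul, mul_comm]

lemma NC_ratio (m : ℕ) :
    ((m:ℝ)+1) * NC V (m+1) = ((Fintype.card V : ℝ) + m) * NC V m := by
  have h1 : ∑ x, SS V (m+1) x = ((m:ℝ)+1) * NC V (m+1) := by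
    rw [sum_SS]; push_cast; ring
  rw [← h1]
  rw [Finset.sum_congr rfl fun x _ => SS_succ m x, Finset.sum_add_distrib, sum_SS,
    Finset.sum_const, nsmul_eq_mul, Finset.card_univ]
  ring

lemma SS_eq (m : ℕ) (x : V) : (Fintype.card V : ℝ) * SS V m x = m * NC V m := by
  induction m with
  | zero => rw [SS_zero]; norm_num
  | succ k ih =>
    rw [SS_succ, mul_add, ih]
    have := NC_ratio (V := V) k
    push_cast
    nlinarith [this]

lemma TT_diag_eq (m : ℕ) (x : V) :
    (Fintype.card V : ℝ) * ((Fintype.card V : ℝ) + 1) * TT V m x x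
      = m * (2*m + (Fintype.card V : ℝ) - 1) * NC V m := by
  set n : ℝ := (Fintype.card V : ℝ)
  induction m with
  | zero => rw [TT_zero]; norm_num
  | succ k ih =>
    rw [TT_succ_diag]
    have h1 := SS_eq (V := V) k x
    have h2 := NC_ratio (V := V) k
    push_cast at h2 ⊢
    nlinarith [h1, h2, ih]

lemma TT_off_eq (m : ℕ) {x y : V} (hxy : x ≠ y) :
    (Fintype.card V : ℝ) * ((Fintype.card V : ℝ) + 1) * TT V m x y
      = m * ((m:ℝ) - 1) * NC V m := by
  set n : ℝ := (Fintype.card V : ℝ)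
  induction m with
  | zero => rw [TT_zero]; norm_num
  | succ k ih =>
    rw [TT_succ_off k hxy]
    have h1 := SS_eq (V := V) k y
    have h2 := NC_ratio (V := V) k
    push_cast at h2 ⊢
    nlinarith [h1, h2, ih]
end Moments

section FinN
variable {n : ℕ}

lemma double_row (hn : (n:ℝ) ≠ 0) {P : Fin n → Fin n → ℝ} (hProw : ∀ x, ∑ y, P x y = 1)
    (g : Fin n → ℝ) : ∑ x, ∑ y, (n:ℝ)⁻¹ * P x y * g x = (n:ℝ)⁻¹ * ∑ x, g x := by
  rw [Finset.mul_sum]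
  refine Finset.sum_congr rfl fun x _ => ?_
  have : ∀ y, (n:ℝ)⁻¹ * P x y * g x = ((n:ℝ)⁻¹ * g x) * P x y := fun y => by ring
  rw [Finset.sum_congr rfl fun y _ => this y, ← Finset.mul_sum, hProw, mul_one]

lemma double_col (hn : (n:ℝ) ≠ 0) {P : Fin n → Fin n → ℝ} (hPcol : ∀ y, ∑ x, P x y = 1)
    (g : Fin n → ℝ) : ∑ x, ∑ y, (n:ℝ)⁻¹ * P x y * g y = (n:ℝ)⁻¹ * ∑ y, g y := by
  rw [Finset.sum_comm, Finset.mul_sum]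
  refine Finset.sum_congr rfl fun y _ => ?_
  have : ∀ x, (n:ℝ)⁻¹ * P x y * g y = ((n:ℝ)⁻¹ * g y) * P x y := fun x => by ring
  rw [Finset.sum_congr rfl fun x _ => this x, ← Finset.mul_sum, hPcol, mul_one]

lemma EP_eq_sq (hn : (n:ℝ) ≠ 0) {P : Fin n → Fin n → ℝ}
    (hProw : ∀ x, ∑ y, P x y = 1) (hPcol : ∀ y, ∑ x, P x y = 1) (φ : Fin n → ℝ) :
    2 * EP (Fin n) (fun _ => (n:ℝ)⁻¹) P φ φ
      = ∑ x, ∑ y, (n:ℝ)⁻¹ * P x y * (φ x - φ y)^2 := by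
  have hA := double_row hn hProw (fun x => (φ x)^2)
  have hB := double_col hn hPcol (fun y => (φ y)^2)
  have key : ∀ x y : Fin n, 2 * ((n:ℝ)⁻¹ * P x y * (φ x * (φ x - φ y)))
      = (n:ℝ)⁻¹ * P x y * (φ x - φ y)^2
        + ((n:ℝ)⁻¹ * P x y * (φ x)^2 - (n:ℝ)⁻¹ * P x y * (φ y)^2) := fun x y => by ring
  unfold EP
  rw [Finset.mul_sum]
  calc ∑ x, 2 * ∑ y, (n:ℝ)⁻¹ * P x y * (φ x * (φ x - φ y))
      = ∑ x, ∑ y, ((n:ℝ)⁻¹ * P x y * (φ x - φ y)^2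
          + ((n:ℝ)⁻¹ * P x y * (φ x)^2 - (n:ℝ)⁻¹ * P x y * (φ y)^2)) := by
        refine Finset.sum_congr rfl fun x _ => ?_
        rw [Finset.mul_sum]
        exact Finset.sum_congr rfl fun y _ => key x y
    _ = (∑ x, ∑ y, (n:ℝ)⁻¹ * P x y * (φ x - φ y)^2)
          + ((∑ x, ∑ y, (n:ℝ)⁻¹ * P x y * (φ x)^2)
            - ∑ x, ∑ y, (n:ℝ)⁻¹ * P x y * (φ y)^2) := by
        simp only [Finset.sum_add_distrib, Finset.sum_sub_distrib]
    _ = ∑ x, ∑ y, (n:ℝ)⁻¹ * P x y * (φ x - φ y)^2 := by rw [hA, hB]; ring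

lemma EP_nonneg (hn : (n:ℝ) ≠ 0) {P : Fin n → Fin n → ℝ} (hP0 : ∀ x y, 0 ≤ P x y)
    (hProw : ∀ x, ∑ y, P x y = 1) (hPcol : ∀ y, ∑ x, P x y = 1) (φ : Fin n → ℝ) :
    0 ≤ EP (Fin n) (fun _ => (n:ℝ)⁻¹) P φ φ := by
  have h := EP_eq_sq hn hProw hPcol φ
  have hQ : 0 ≤ ∑ x, ∑ y, (n:ℝ)⁻¹ * P x y * (φ x - φ y)^2 := by
    refine Finset.sum_nonneg fun x _ => Finset.sum_nonneg fun y _ => ?_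
    have h0 : (0:ℝ) ≤ (n:ℝ)⁻¹ := by positivity
    exact mul_nonneg (mul_nonneg h0 (hP0 x y)) (sq_nonneg _)
  linarith

lemma EP_add_const (hn : (n:ℝ) ≠ 0) {P : Fin n → Fin n → ℝ}
    (hProw : ∀ x, ∑ y, P x y = 1) (hPcol : ∀ y, ∑ x, P x y = 1) (a : ℝ) (φ : Fin n → ℝ) :
    EP (Fin n) (fun _ => (n:ℝ)⁻¹) P (fun z => a + φ z) (fun z => a + φ z)
      = EP (Fin n) (fun _ => (n:ℝ)⁻¹) P φ φ := by
  have hA := double_row hn hProw φ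
  have hB := double_col hn hPcol φ
  unfold EP
  calc ∑ x, ∑ y, (n:ℝ)⁻¹ * P x y * ((a + φ x) * ((a + φ x) - (a + φ y)))
      = ∑ x, ∑ y, ((n:ℝ)⁻¹ * P x y * (φ x * (φ x - φ y))
          + (a * ((n:ℝ)⁻¹ * P x y * φ x) - a * ((n:ℝ)⁻¹ * P x y * φ y))) := by
        refine Finset.sum_congr rfl fun x _ => Finset.sum_congr rfl fun y _ => by ring
    _ = (∑ x, ∑ y, (n:ℝ)⁻¹ * P x y * (φ x * (φ x - φ y)))
          + ((∑ x, ∑ y, a * ((n:ℝ)⁻¹ * P x y * φ x))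
            - ∑ x, ∑ y, a * ((n:ℝ)⁻¹ * P x y * φ y)) := by
        simp only [Finset.sum_add_distrib, Finset.sum_sub_distrib]
    _ = ∑ x, ∑ y, (n:ℝ)⁻¹ * P x y * (φ x * (φ x - φ y)) := by
        simp only [← Finset.mul_sum]
        rw [hA, hB]; ring

lemma EP_K (hn : (n:ℝ) ≠ 0) (φ : Fin n → ℝ) :
    EP (Fin n) (fun _ => (n:ℝ)⁻¹) (fun _ _ => (n:ℝ)⁻¹) φ φ
      = varPi (Fin n) (fun _ => (n:ℝ)⁻¹) φ := by
  unfold EP varPi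
  have hcard : ((Finset.univ : Finset (Fin n)).card : ℝ) = n := by simp
  calc ∑ x, ∑ y, (n:ℝ)⁻¹ * (n:ℝ)⁻¹ * (φ x * (φ x - φ y))
      = ∑ x, ((n:ℝ)⁻¹ * (φ x)^2 - ((n:ℝ)⁻¹ * φ x) * ∑ y, (n:ℝ)⁻¹ * φ y) := by
        refine Finset.sum_congr rfl fun x _ => ?_
        have hterm : ∀ y, (n:ℝ)⁻¹ * (n:ℝ)⁻¹ * (φ x * (φ x - φ y))
            = (n:ℝ)⁻¹ * (n:ℝ)⁻¹ * (φ x)^2 - (n:ℝ)⁻¹ * φ x * ((n:ℝ)⁻¹ * φ y) := fun y => by ring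
        rw [Finset.sum_congr rfl fun y _ => hterm y, Finset.sum_sub_distrib,
          Finset.sum_const, nsmul_eq_mul, hcard,
          (Finset.mul_sum Finset.univ (fun y => (n:ℝ)⁻¹ * φ y) ((n:ℝ)⁻¹ * φ x)).symm,
          show (n:ℝ)*((n:ℝ)⁻¹*(n:ℝ)⁻¹*(φ x)^2) = ((n:ℝ)*(n:ℝ)⁻¹)*((n:ℝ)⁻¹*(φ x)^2) from by ring,
          mul_inv_cancel₀ hn, one_mul]
    _ = ∑ x, (n:ℝ)⁻¹ * (φ x)^2 - (∑ x, (n:ℝ)⁻¹ * φ x) ^ 2 := by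
        rw [Finset.sum_sub_distrib, ← Finset.sum_mul]
        ring

lemma varPi_nonneg (hn : (n:ℝ) ≠ 0) (φ : Fin n → ℝ) :
    0 ≤ varPi (Fin n) (fun _ => (n:ℝ)⁻¹) φ := by
  rw [← EP_K hn φ]
  have hrow : ∀ x : Fin n, ∑ _y : Fin n, (n:ℝ)⁻¹ = 1 := by
    intro x
    rw [Finset.sum_const, nsmul_eq_mul, Finset.card_univ, Fintype.card_fin]
    field_simp
  exact EP_nonneg hn (fun x y => by positivity) (fun x => hrow x) (fun y => hrow y) φ
end FinN

section Master
variable {V : Type*} [Fintype V] [DecidableEq V]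

lemma meanOn_uniform {u : ℝ} {μ : (V → ℕ) → ℝ} (hμ : ∀ η, μ η = u) (m : ℕ)
    (f : (V → ℕ) → ℝ) : meanOn V m μ f = u * ∑ η ∈ configs V m, f η := by
  unfold meanOn
  rw [Finset.mul_sum]
  exact Finset.sum_congr rfl fun η _ => by rw [hμ]

lemma configs_nonempty [Nonempty V] (m : ℕ) : (configs V m).Nonempty := by
  refine ⟨fun z => if z = Classical.arbitrary V then m else 0, mem_configs_iff.mpr ?_⟩
  simp

lemma varOn_nonneg (m : ℕ) {μ : (V → ℕ) → ℝ}
    (hμ : ∀ η, μ η = ((configs V m).card : ℝ)⁻¹) (hne : (configs V m).Nonempty)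
    (f : (V → ℕ) → ℝ) : 0 ≤ varOn V m μ f := by
  have hN : (0:ℝ) < ((configs V m).card : ℝ) := by
    exact_mod_cast Finset.card_pos.mpr hne
  set N : ℝ := ((configs V m).card : ℝ) with hNdef
  unfold varOn
  rw [meanOn_uniform hμ, meanOn_uniform hμ]
  have hCS : (∑ η ∈ configs V m, f η)^2
      ≤ N * ∑ η ∈ configs V m, (f η)^2 := by
    exact_mod_cast sq_sum_le_card_mul_sum_sq (s := configs V m) (f := f)
  have h2 : N⁻¹ * N = 1 := inv_mul_cancel₀ (ne_of_gt hN)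
  have h3 := mul_le_mul_of_nonneg_left hCS (by positivity : (0:ℝ) ≤ N⁻¹ * N⁻¹)
  calc (0:ℝ) ≤ N⁻¹ * N⁻¹ * (N * ∑ η ∈ configs V m, (f η)^2)
          - N⁻¹ * N⁻¹ * (∑ η ∈ configs V m, f η)^2 := by linarith
    _ = (N⁻¹ * N) * (N⁻¹ * ∑ η ∈ configs V m, (f η)^2)
          - (N⁻¹ * ∑ η ∈ configs V m, f η)^2 := by ring
    _ = N⁻¹ * ∑ η ∈ configs V m, (f η)^2 - (N⁻¹ * ∑ η ∈ configs V m, f η)^2 := by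
        rw [h2, one_mul]

lemma move_addOne (ξ : V → ℕ) (x y : V) : move V (addOne V ξ x) x y = addOne V ξ y := by
  show addOne V (Function.update (addOne V ξ x) x (addOne V ξ x x - 1)) y = addOne V ξ y
  rw [addOne_apply_self, Nat.add_sub_cancel]
  show addOne V (Function.update (Function.update ξ x (ξ x + 1)) x (ξ x)) y = addOne V ξ y
  rw [Function.update_idem, Function.update_eq_self]

lemma EZRP_master {u : ℝ} {μ : (V → ℕ) → ℝ} (hμ : ∀ η, μ η = u) (m : ℕ)
    (P : V → V → ℝ) (f : (V → ℕ) → ℝ) :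
    EZRP V P (fun _ k => if k = 0 then 0 else 1) μ (m+1) f f
      = u * ∑ ξ ∈ configs V m, ∑ x, ∑ y,
          P x y * (f (addOne V ξ x) * (f (addOne V ξ x) - f (addOne V ξ y))) := by
  have key : ∀ x : V,
      (∑ η ∈ configs V (m+1), ∑ y, μ η * (if η x = 0 then (0:ℝ) else 1) * P x y
          * (f η * (f η - f (move V η x y))))
      = ∑ ξ ∈ configs V m, ∑ y, u * P x y
          * (f (addOne V ξ x) * (f (addOne V ξ x) - f (addOne V ξ y))) := by
    intro x
    calc (∑ η ∈ configs V (m+1), ∑ y, μ η * (if η x = 0 then (0:ℝ) else 1) * P x y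
            * (f η * (f η - f (move V η x y))))
        = ∑ η ∈ configs V (m+1), (if η x = 0 then (0:ℝ) else
            ∑ y, u * P x y * (f η * (f η - f (move V η x y)))) := by
          refine Finset.sum_congr rfl fun η _ => ?_
          by_cases h : η x = 0
          · simp [h]
          · rw [if_neg h, if_neg h]
            exact Finset.sum_congr rfl fun y _ => by rw [hμ, mul_one]
      _ = ∑ ξ ∈ configs V m, ∑ y, u * P x y
            * (f (addOne V ξ x) * (f (addOne V ξ x) - f (move V (addOne V ξ x) x y))) :=
          sum_shift m x _
      _ = ∑ ξ ∈ configs V m, ∑ y, u * P x y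
            * (f (addOne V ξ x) * (f (addOne V ξ x) - f (addOne V ξ y))) :=
          Finset.sum_congr rfl fun ξ _ => Finset.sum_congr rfl fun y _ => by rw [move_addOne]
  unfold EZRP
  calc ∑ η ∈ configs V (m+1), ∑ x, ∑ y, μ η * (if η x = 0 then (0:ℝ) else 1) * P x y
          * (f η * (f η - f (move V η x y)))
      = ∑ x, ∑ η ∈ configs V (m+1), ∑ y, μ η * (if η x = 0 then (0:ℝ) else 1) * P x y
          * (f η * (f η - f (move V η x y))) := Finset.sum_comm
    _ = ∑ x, ∑ ξ ∈ configs V m, ∑ y, u * P x y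
          * (f (addOne V ξ x) * (f (addOne V ξ x) - f (addOne V ξ y))) :=
        Finset.sum_congr rfl fun x _ => key x
    _ = ∑ ξ ∈ configs V m, ∑ x, ∑ y, u * P x y
          * (f (addOne V ξ x) * (f (addOne V ξ x) - f (addOne V ξ y))) := Finset.sum_comm
    _ = u * ∑ ξ ∈ configs V m, ∑ x, ∑ y, P x y
          * (f (addOne V ξ x) * (f (addOne V ξ x) - f (addOne V ξ y))) := by
        simp only [Finset.mul_sum, mul_assoc]

end Master

section Lin
variable {V : Type*} [Fintype V] [DecidableEq V]

lemma EZRP_eq_EPsum {n : ℕ} (hn : (n:ℝ) ≠ 0) {u : ℝ} {μ : (Fin n → ℕ) → ℝ}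
    (hμ : ∀ η, μ η = u) (m : ℕ) (P : Fin n → Fin n → ℝ) (f : (Fin n → ℕ) → ℝ) :
    EZRP (Fin n) P (fun _ k => if k = 0 then 0 else 1) μ (m+1) f f
      = u * (n:ℝ) * ∑ ξ ∈ configs (Fin n) m,
          EP (Fin n) (fun _ => (n:ℝ)⁻¹) P (fun z => f (addOne (Fin n) ξ z))
            (fun z => f (addOne (Fin n) ξ z)) := by
  rw [EZRP_master hμ, mul_assoc]
  congr 1
  rw [Finset.mul_sum]
  refine Finset.sum_congr rfl fun ξ _ => ?_
  unfold EP
  rw [Finset.mul_sum]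
  refine Finset.sum_congr rfl fun x _ => ?_
  rw [Finset.mul_sum]
  refine Finset.sum_congr rfl fun y _ => ?_
  field_simp

lemma flin_addOne (φ : V → ℝ) (ξ : V → ℕ) (z : V) :
    ∑ w, ((addOne V ξ z w : ℕ) : ℝ) * φ w = (∑ w, (ξ w : ℝ) * φ w) + φ z := by
  rw [← Finset.sum_erase_add _ _ (Finset.mem_univ z),
    ← Finset.sum_erase_add Finset.univ (fun w => (ξ w : ℝ) * φ w) (Finset.mem_univ z)]
  have h1 : ∀ w ∈ Finset.univ.erase z, ((addOne V ξ z w : ℕ) : ℝ) * φ w = (ξ w : ℝ) * φ w := by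
    intro w hw
    unfold addOne
    rw [Function.update_of_ne (Finset.mem_erase.mp hw).1]
  rw [Finset.sum_congr rfl h1, addOne_apply_self]
  push_cast
  ring

lemma sum_flin (m : ℕ) (φ : V → ℝ) :
    ∑ η ∈ configs V m, ∑ z, (η z : ℝ) * φ z = ∑ z, SS V m z * φ z := by
  rw [Finset.sum_comm]
  exact Finset.sum_congr rfl fun z _ => by rw [SS, ← Finset.sum_mul]

lemma sum_flin_sq (m : ℕ) (φ : V → ℝ) :
    ∑ η ∈ configs V m, (∑ z, (η z : ℝ) * φ z)^2
      = ∑ w, ∑ v, TT V m w v * (φ w * φ v) := by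
  have h1 : ∀ η : V → ℕ, (∑ z, (η z : ℝ) * φ z)^2
      = ∑ w, ∑ v, (η w : ℝ) * (η v : ℝ) * (φ w * φ v) := by
    intro η
    rw [pow_two, Finset.sum_mul_sum]
    exact Finset.sum_congr rfl fun w _ => Finset.sum_congr rfl fun v _ => by ring
  rw [Finset.sum_congr rfl fun η _ => h1 η, Finset.sum_comm]
  refine Finset.sum_congr rfl fun w _ => ?_
  rw [Finset.sum_comm]
  refine Finset.sum_congr rfl fun v _ => ?_
  rw [TT, ← Finset.sum_mul]

end Lin

section VarLin
variable {n : ℕ}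

lemma NC_pos (hn1 : 1 ≤ n) (m : ℕ) : 0 < NC (Fin n) m := by
  have : Nonempty (Fin n) := ⟨⟨0, by omega⟩⟩
  have h := configs_nonempty (V := Fin n) m
  unfold NC
  exact_mod_cast Finset.card_pos.mpr h

lemma varOn_flin (hn1 : 1 ≤ n) (m : ℕ) {μ : (Fin n → ℕ) → ℝ}
    (hμ : ∀ η, μ η = ((configs (Fin n) m).card : ℝ)⁻¹) (φ : Fin n → ℝ) :
    varOn (Fin n) m μ (fun η => ∑ z, (η z : ℝ) * φ z)
      = (m:ℝ) * ((m:ℝ) + n) / ((n:ℝ) + 1) * varPi (Fin n) (fun _ => (n:ℝ)⁻¹) φ := by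
  have hn0 : (0:ℝ) < (n:ℝ) := by exact_mod_cast Nat.lt_of_lt_of_le Nat.zero_lt_one hn1
  have hn : (n:ℝ) ≠ 0 := ne_of_gt hn0
  have hn1' : (n:ℝ) + 1 ≠ 0 := by positivity
  have hN : (0:ℝ) < NC (Fin n) m := NC_pos hn1 m
  have hNne : NC (Fin n) m ≠ 0 := ne_of_gt hN
  have hcard : ((Fintype.card (Fin n) : ℕ) : ℝ) = (n:ℝ) := by simp
  have hS : ∀ z : Fin n, SS (Fin n) m z = (m:ℝ) * NC (Fin n) m / n := by
    intro z
    have h := SS_eq (V := Fin n) m z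
    rw [hcard] at h
    field_simp
    linarith
  have hTd : ∀ w : Fin n, TT (Fin n) m w w
      = (m:ℝ) * (2*(m:ℝ) + n - 1) * NC (Fin n) m / ((n:ℝ) * ((n:ℝ) + 1)) := by
    intro w
    have h := TT_diag_eq (V := Fin n) m w
    rw [hcard] at h
    field_simp
    linarith
  have hTo : ∀ w v : Fin n, w ≠ v → TT (Fin n) m w v
      = (m:ℝ) * ((m:ℝ) - 1) * NC (Fin n) m / ((n:ℝ) * ((n:ℝ) + 1)) := by
    intro w v hwv
    have h := TT_off_eq (V := Fin n) m hwv
    rw [hcard] at h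
    field_simp
    linarith
  set c1 : ℝ := (m:ℝ) * (2*(m:ℝ) + n - 1) * NC (Fin n) m / ((n:ℝ) * ((n:ℝ) + 1)) with hc1
  set c2 : ℝ := (m:ℝ) * ((m:ℝ) - 1) * NC (Fin n) m / ((n:ℝ) * ((n:ℝ) + 1)) with hc2
  have hsplit : ∑ w, ∑ v, TT (Fin n) m w v * (φ w * φ v)
      = c1 * ∑ w, (φ w)^2 + c2 * ((∑ w, φ w)^2 - ∑ w, (φ w)^2) := by
    have hrow : ∀ w : Fin n, ∑ v, TT (Fin n) m w v * (φ w * φ v)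
        = c1 * (φ w)^2 + c2 * (φ w * ((∑ v, φ v) - φ w)) := by
      intro w
      rw [← Finset.sum_erase_add _ _ (Finset.mem_univ w)]
      have he : ∑ v ∈ Finset.univ.erase w, TT (Fin n) m w v * (φ w * φ v)
          = c2 * (φ w * ((∑ v, φ v) - φ w)) := by
        calc ∑ v ∈ Finset.univ.erase w, TT (Fin n) m w v * (φ w * φ v)
            = ∑ v ∈ Finset.univ.erase w, (c2 * φ w) * φ v := by
              refine Finset.sum_congr rfl fun v hv => ?_
              rw [hTo w v (Ne.symm (Finset.mem_erase.mp hv).1)]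
              ring
          _ = (c2 * φ w) * ∑ v ∈ Finset.univ.erase w, φ v := by rw [← Finset.mul_sum]
          _ = c2 * (φ w * ((∑ v, φ v) - φ w)) := by
              rw [Finset.sum_erase_eq_sub (Finset.mem_univ w)]
              ring
      rw [he, hTd w]
      ring
    rw [Finset.sum_congr rfl fun w _ => hrow w, Finset.sum_add_distrib, ← Finset.mul_sum]
    congr 1
    have hh : ∑ w, c2 * (φ w * ((∑ v, φ v) - φ w))
        = c2 * ∑ w, (φ w * (∑ v, φ v) - (φ w)^2) := by
      rw [← Finset.mul_sum]
      exact congrArg _ (Finset.sum_congr rfl fun w _ => by ring)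
    rw [hh, Finset.sum_sub_distrib, ← Finset.sum_mul]
    ring
  have hmean : ∑ z, SS (Fin n) m z * φ z = (m:ℝ) * NC (Fin n) m / n * ∑ z, φ z := by
    rw [Finset.mul_sum]
    exact Finset.sum_congr rfl fun z _ => by rw [hS z]
  unfold varOn
  rw [meanOn_uniform hμ, meanOn_uniform hμ]
  simp only []
  rw [sum_flin_sq m φ, sum_flin m φ, hsplit, hmean]
  unfold varPi
  have hv1 : ∑ x : Fin n, (n:ℝ)⁻¹ * (φ x)^2 = (n:ℝ)⁻¹ * ∑ x, (φ x)^2 :=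
    (Finset.mul_sum _ _ _).symm
  have hv2 : ∑ x : Fin n, (n:ℝ)⁻¹ * φ x = (n:ℝ)⁻¹ * ∑ x, φ x :=
    (Finset.mul_sum _ _ _).symm
  rw [hv1, hv2]
  show (NC (Fin n) m)⁻¹ * _ - ((NC (Fin n) m)⁻¹ * _)^2 = _
  rw [hc1, hc2]
  field_simp
  ring

lemma EZRP_flin (hn : (n:ℝ) ≠ 0) {u : ℝ} {μ : (Fin n → ℕ) → ℝ} (hμ : ∀ η, μ η = u)
    (m : ℕ) {P : Fin n → Fin n → ℝ}
    (hProw : ∀ x, ∑ y, P x y = 1) (hPcol : ∀ y, ∑ x, P x y = 1) (φ : Fin n → ℝ) :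
    EZRP (Fin n) P (fun _ k => if k = 0 then 0 else 1) μ (m+1)
        (fun η => ∑ z, (η z : ℝ) * φ z) (fun η => ∑ z, (η z : ℝ) * φ z)
      = u * (n:ℝ) * NC (Fin n) m * EP (Fin n) (fun _ => (n:ℝ)⁻¹) P φ φ := by
  rw [EZRP_eq_EPsum hn hμ]
  have hEP : ∀ ξ ∈ configs (Fin n) m,
      EP (Fin n) (fun _ => (n:ℝ)⁻¹) P
        (fun z => ∑ w, ((addOne (Fin n) ξ z w : ℕ):ℝ) * φ w)
        (fun z => ∑ w, ((addOne (Fin n) ξ z w : ℕ):ℝ) * φ w)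
      = EP (Fin n) (fun _ => (n:ℝ)⁻¹) P φ φ := by
    intro ξ _
    have hfun : (fun z => ∑ w, ((addOne (Fin n) ξ z w : ℕ):ℝ) * φ w)
        = (fun z => (∑ w, (ξ w : ℝ) * φ w) + φ z) := funext fun z => flin_addOne φ ξ z
    rw [hfun]
    exact EP_add_const hn hProw hPcol _ φ
  rw [Finset.sum_congr rfl hEP, Finset.sum_const, nsmul_eq_mul]
  unfold NC
  ring
end VarLin

end Aux

/-- two-sided bounds on the rate-one ZRP Poincaré constant:
c λ(P)(1+m/n)⁻² ≤ λ(ZRP(P,1,m)) ≤ λ(P) n(n+1)/((n+m)(n+m-1)). -/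
theorem zrp_rate_one_order (n m : ℕ) (hn : 2 ≤ n) (hm : 1 ≤ m)
    (P : Fin n → Fin n → ℝ)
    (hP0 : ∀ x y, 0 ≤ P x y) (hProw : ∀ x, ∑ y, P x y = 1)
    (hPcol : ∀ y, ∑ x, P x y = 1)
    (μ : (Fin n → ℕ) → ℝ) (hμ : ∀ η, μ η = ((configs (Fin n) m).card : ℝ)⁻¹)
    (c : ℝ) (hc : 0 < c)
    (hMF : ∀ f : (Fin n → ℕ) → ℝ,
      c * ((1 + (m : ℝ) / n) ^ 2)⁻¹ * varOn (Fin n) m μ f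
        ≤ EZRP (Fin n) (fun _ _ => (n : ℝ)⁻¹) (fun _ k => if k = 0 then 0 else 1) μ m f f)
    (lamP : ℝ)
    (hlam1 : ∀ φ : Fin n → ℝ,
      lamP * varPi (Fin n) (fun _ => (n : ℝ)⁻¹) φ ≤ EP (Fin n) (fun _ => (n : ℝ)⁻¹) P φ φ)
    (hlam2 : ∃ φ : Fin n → ℝ, varPi (Fin n) (fun _ => (n : ℝ)⁻¹) φ ≠ 0 ∧
      EP (Fin n) (fun _ => (n : ℝ)⁻¹) P φ φ = lamP * varPi (Fin n) (fun _ => (n : ℝ)⁻¹) φ)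
    (lamZ : ℝ)
    (hZ1 : ∀ f : (Fin n → ℕ) → ℝ,
      lamZ * varOn (Fin n) m μ f
        ≤ EZRP (Fin n) P (fun _ k => if k = 0 then 0 else 1) μ m f f)
    (hZ2 : ∃ f : (Fin n → ℕ) → ℝ, varOn (Fin n) m μ f ≠ 0 ∧
      EZRP (Fin n) P (fun _ k => if k = 0 then 0 else 1) μ m f f
        = lamZ * varOn (Fin n) m μ f) :
    c * lamP * ((1 + (m : ℝ) / n) ^ 2)⁻¹ ≤ lamZ
    ∧ lamZ ≤ lamP * ((n : ℝ) * ((n : ℝ) + 1))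
        / (((n : ℝ) + (m : ℝ)) * ((n : ℝ) + (m : ℝ) - 1)) := by
  obtain ⟨m0, rfl⟩ : ∃ k, m = k + 1 := ⟨m - 1, by omega⟩
  haveI : Nonempty (Fin n) := ⟨⟨0, by omega⟩⟩
  have hn0 : (0:ℝ) < (n:ℝ) := by
    have : 0 < n := by omega
    exact_mod_cast this
  have hnne : (n:ℝ) ≠ 0 := ne_of_gt hn0
  have hn1' : (0:ℝ) < (n:ℝ) + 1 := by positivity
  have hNpos : (0:ℝ) < NC (Fin n) (m0+1) := NC_pos (by omega) _
  have hN0pos : (0:ℝ) < NC (Fin n) m0 := NC_pos (by omega) _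
  set u : ℝ := ((configs (Fin n) (m0+1)).card : ℝ)⁻¹ with hudef
  have huN : u * NC (Fin n) (m0+1) = 1 := inv_mul_cancel₀ (ne_of_gt hNpos)
  have hu0 : (0:ℝ) < u := by
    rw [hudef]
    have : (0:ℝ) < ((configs (Fin n) (m0+1)).card : ℝ) := hNpos
    positivity
  have hinv2 : (0:ℝ) < ((1 + ((m0:ℝ)+1) / n) ^ 2)⁻¹ := by positivity
  have hinvK : (0:ℝ) < ((1 + (((m0+1:ℕ)):ℝ) / n) ^ 2)⁻¹ := by positivity
  have hcard : ((Fintype.card (Fin n) : ℕ) : ℝ) = (n:ℝ) := by simp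
  constructor
  · -- lower bound
    obtain ⟨f, hfvar, hfE⟩ := hZ2
    have hvar0 : 0 ≤ varOn (Fin n) (m0+1) μ f :=
      varOn_nonneg (m0+1) hμ (configs_nonempty _) f
    have hvarpos : 0 < varOn (Fin n) (m0+1) μ f := lt_of_le_of_ne hvar0 (Ne.symm hfvar)
    have hmaster := EZRP_eq_EPsum hnne hμ m0 P f
    have hmasterK := EZRP_eq_EPsum hnne hμ m0 (fun _ _ => (n:ℝ)⁻¹) f
    by_cases hlP : 0 ≤ lamP
    · have hsum : lamP * ∑ ξ ∈ configs (Fin n) m0,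
          EP (Fin n) (fun _ => (n:ℝ)⁻¹) (fun _ _ => (n:ℝ)⁻¹)
            (fun z => f (addOne (Fin n) ξ z)) (fun z => f (addOne (Fin n) ξ z))
          ≤ ∑ ξ ∈ configs (Fin n) m0,
              EP (Fin n) (fun _ => (n:ℝ)⁻¹) P
                (fun z => f (addOne (Fin n) ξ z)) (fun z => f (addOne (Fin n) ξ z)) := by
        rw [Finset.mul_sum]
        refine Finset.sum_le_sum fun ξ _ => ?_
        rw [EP_K hnne]
        exact hlam1 _
      have hchain : lamP * EZRP (Fin n) (fun _ _ => (n:ℝ)⁻¹)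
            (fun _ k => if k = 0 then 0 else 1) μ (m0+1) f f
          ≤ EZRP (Fin n) P (fun _ k => if k = 0 then 0 else 1) μ (m0+1) f f := by
        rw [hmaster, hmasterK]
        calc lamP * (u * (n:ℝ) * ∑ ξ ∈ configs (Fin n) m0,
              EP (Fin n) (fun _ => (n:ℝ)⁻¹) (fun _ _ => (n:ℝ)⁻¹)
                (fun z => f (addOne (Fin n) ξ z)) (fun z => f (addOne (Fin n) ξ z)))
            = u * (n:ℝ) * (lamP * ∑ ξ ∈ configs (Fin n) m0,
              EP (Fin n) (fun _ => (n:ℝ)⁻¹) (fun _ _ => (n:ℝ)⁻¹)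
                (fun z => f (addOne (Fin n) ξ z)) (fun z => f (addOne (Fin n) ξ z))) := by ring
          _ ≤ u * (n:ℝ) * ∑ ξ ∈ configs (Fin n) m0,
              EP (Fin n) (fun _ => (n:ℝ)⁻¹) P
                (fun z => f (addOne (Fin n) ξ z)) (fun z => f (addOne (Fin n) ξ z)) := by
              exact mul_le_mul_of_nonneg_left hsum (by positivity)
      have hMFf := hMF f
      have h1 : lamP * (c * ((1 + (((m0+1:ℕ)):ℝ) / n) ^ 2)⁻¹ * varOn (Fin n) (m0+1) μ f)
          ≤ lamZ * varOn (Fin n) (m0+1) μ f := by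
        calc lamP * (c * ((1 + (((m0+1:ℕ)):ℝ) / n) ^ 2)⁻¹ * varOn (Fin n) (m0+1) μ f)
            ≤ lamP * EZRP (Fin n) (fun _ _ => (n:ℝ)⁻¹)
                (fun _ k => if k = 0 then 0 else 1) μ (m0+1) f f :=
              mul_le_mul_of_nonneg_left hMFf hlP
          _ ≤ EZRP (Fin n) P (fun _ k => if k = 0 then 0 else 1) μ (m0+1) f f := hchain
          _ = lamZ * varOn (Fin n) (m0+1) μ f := hfE
      have h2 : (c * lamP * ((1 + (((m0+1:ℕ)):ℝ) / n) ^ 2)⁻¹) * varOn (Fin n) (m0+1) μ f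
          ≤ lamZ * varOn (Fin n) (m0+1) μ f := le_of_eq_of_le (by ring) h1
      exact le_of_mul_le_mul_right h2 hvarpos
    · push_neg at hlP
      have hE0 : 0 ≤ EZRP (Fin n) P (fun _ k => if k = 0 then 0 else 1) μ (m0+1) f f := by
        rw [hmaster]
        refine mul_nonneg (by positivity) (Finset.sum_nonneg fun ξ _ => ?_)
        exact EP_nonneg hnne hP0 hProw hPcol _
      have hlZ : 0 ≤ lamZ := by nlinarith [hfE, hE0, hvarpos]
      have hneg : c * lamP * ((1 + (((m0+1:ℕ)):ℝ) / n) ^ 2)⁻¹ ≤ 0 := by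
        have := mul_pos hc hinvK
        nlinarith
      linarith
  · -- upper bound
    obtain ⟨φ, hφvar, hφE⟩ := hlam2
    have hφ0 : 0 ≤ varPi (Fin n) (fun _ => (n:ℝ)⁻¹) φ := varPi_nonneg hnne φ
    have hφpos : 0 < varPi (Fin n) (fun _ => (n:ℝ)⁻¹) φ := lt_of_le_of_ne hφ0 (Ne.symm hφvar)
    have hE := EZRP_flin hnne hμ m0 hProw hPcol φ
    have hV := varOn_flin (by omega) (m0+1) hμ φ
    have h1 := hZ1 (fun η => ∑ z, (η z : ℝ) * φ z)
    rw [hE, hV, hφE] at h1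
    set M : ℝ := ((m0+1:ℕ):ℝ) with hMdef
    have hMpos : (0:ℝ) < M := by rw [hMdef]; push_cast; positivity
    have hnm0 : (0:ℝ) < (n:ℝ) + (m0:ℝ) := by positivity
    -- h1 : lamZ * (M * (M + n)/(n+1) * varPi) ≤ u * n * NC m0 * (lamP * varPi)
    have h2 : (lamZ * (M * (M + (n:ℝ)) / ((n:ℝ)+1))) * varPi (Fin n) (fun _ => (n:ℝ)⁻¹) φ
        ≤ (u * (n:ℝ) * NC (Fin n) m0 * lamP) * varPi (Fin n) (fun _ => (n:ℝ)⁻¹) φ := by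
      calc (lamZ * (M * (M + (n:ℝ)) / ((n:ℝ)+1))) * varPi (Fin n) (fun _ => (n:ℝ)⁻¹) φ
          = lamZ * (M * (M + (n:ℝ)) / ((n:ℝ)+1) * varPi (Fin n) (fun _ => (n:ℝ)⁻¹) φ) := by ring
        _ ≤ u * (n:ℝ) * NC (Fin n) m0 * (lamP * varPi (Fin n) (fun _ => (n:ℝ)⁻¹) φ) := h1
        _ = (u * (n:ℝ) * NC (Fin n) m0 * lamP) * varPi (Fin n) (fun _ => (n:ℝ)⁻¹) φ := by ring
    have h3 : lamZ * (M * (M + (n:ℝ)) / ((n:ℝ)+1)) ≤ u * (n:ℝ) * NC (Fin n) m0 * lamP :=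
      le_of_mul_le_mul_right h2 hφpos
    have hratio := NC_ratio (V := Fin n) m0
    rw [hcard] at hratio
    have key : u * NC (Fin n) m0 = M / ((n:ℝ) + m0) := by
      rw [eq_div_iff (ne_of_gt hnm0)]
      calc u * NC (Fin n) m0 * ((n:ℝ) + (m0:ℝ))
          = u * (((n:ℝ) + (m0:ℝ)) * NC (Fin n) m0) := by ring
        _ = u * (((m0:ℝ)+1) * NC (Fin n) (m0+1)) := by rw [← hratio]
        _ = ((m0:ℝ)+1) * (u * NC (Fin n) (m0+1)) := by ring
        _ = M := by rw [huN, mul_one, hMdef]; push_cast; ring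
    have h4 : lamZ * (M * (M + (n:ℝ)) / ((n:ℝ)+1)) ≤ M / ((n:ℝ) + m0) * ((n:ℝ) * lamP) := by
      calc lamZ * (M * (M + (n:ℝ)) / ((n:ℝ)+1)) ≤ u * (n:ℝ) * NC (Fin n) m0 * lamP := h3
        _ = (u * NC (Fin n) m0) * ((n:ℝ) * lamP) := by ring
        _ = M / ((n:ℝ) + m0) * ((n:ℝ) * lamP) := by rw [key]
    have hD : (0:ℝ) < ((n:ℝ) + (((m0+1:ℕ)):ℝ)) * ((n:ℝ) + (((m0+1:ℕ)):ℝ) - 1) := by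
      have e1 : (n:ℝ) + (((m0+1:ℕ)):ℝ) - 1 = (n:ℝ) + (m0:ℝ) := by push_cast; ring
      have e2 : (0:ℝ) < (n:ℝ) + (((m0+1:ℕ)):ℝ) := by positivity
      rw [e1]
      exact mul_pos e2 hnm0
    rw [le_div_iff₀ hD]
    -- clear denominators in h4
    have h5 := mul_le_mul_of_nonneg_right h4 (le_of_lt (mul_pos hn1' hnm0))
    have h5' : M * (lamZ * (((n:ℝ) + M) * ((n:ℝ) + (m0:ℝ))))
        ≤ M * (lamP * ((n:ℝ) * ((n:ℝ) + 1))) := by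
      calc M * (lamZ * (((n:ℝ) + M) * ((n:ℝ) + (m0:ℝ))))
          = lamZ * (M * (M + (n:ℝ)) / ((n:ℝ)+1)) * (((n:ℝ)+1) * ((n:ℝ) + (m0:ℝ))) := by
            field_simp
            ring
        _ ≤ M / ((n:ℝ) + m0) * ((n:ℝ) * lamP) * (((n:ℝ)+1) * ((n:ℝ) + (m0:ℝ))) := h5
        _ = M * (lamP * ((n:ℝ) * ((n:ℝ) + 1))) := by
            field_simp
    have h6 : lamZ * (((n:ℝ) + M) * ((n:ℝ) + (m0:ℝ)))
        ≤ lamP * ((n:ℝ) * ((n:ℝ) + 1)) := le_of_mul_le_mul_left h5' hMpos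
    have e3 : ((n:ℝ) + (((m0+1:ℕ)):ℝ)) * ((n:ℝ) + (((m0+1:ℕ)):ℝ) - 1)
        = ((n:ℝ) + M) * ((n:ℝ) + (m0:ℝ)) := by rw [hMdef]; push_cast; ring
    rw [e3]
    exact h6
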